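/- Let G be a probability measure on (Ω,𝒜), n ∈ ℕ, F : Ω → ℝⁿ bounded measurable, and η* ∈ ℝⁿ. Let Q* be the probability measure with dQ*/dG = e^{−⟨η*,F⟩}/∫ e^{−⟨η*,F⟩} dG, and assume ∫ F dQ* = 0. Then for every probability measure Q ≪ G with KL(Q‖G) < ∞ and ∫ F dQ = 0, one has the Pythagorean identity KL(Q‖G) = KL(Q‖Q*) + KL(Q*‖G). In particular KL(Q‖G) ≥ KL(Q*‖G), with equality if and only if Q = Q*, so Q* is the unique minimiser of KL(·‖G) over measures satisfying the linear constraint ∫ F dQ = 0. -/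

import Mathlib

open MeasureTheory
open scoped ENNReal

/-- Kullback–Leibler divergence `KL(Q‖P) = ∫ log(dQ/dP) dQ`. -/
noncomputable def klDiv {Ω : Type*} [MeasurableSpace Ω] (Q P : Measure Ω) : ℝ :=
  ∫ ω, Real.log ((Q.rnDeriv P) ω).toReal ∂Q

/-!
Write `f = -⟨η*, F⟩` and `Z = ∫ exp f dG`, so that `Q* = G.tilted f` and `log (dQ*/dG) = f - log Z`.
For any `Q ≪ G` the chain rule `log (dQ/dG) = log (dQ/dQ*) + f - log Z` integrates against `Q` to
`KL(Q‖G) = KL(Q‖Q*) + ∫ f dQ - log Z`, while `KL(Q*‖G) = ∫ f dQ* - log Z`. The constraint makes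
`∫ f dQ = 0 = ∫ f dQ*`, which gives the Pythagorean identity; Gibbs' inequality for `KL(Q‖Q*)`
then yields minimality and uniqueness.
-/

open Real

lemma abs_sum_mul_le {ι : Type*} [Fintype ι] (η x : ι → ℝ) {C : ℝ} (hx : ∀ i, |x i| ≤ C) :
    |∑ i, η i * x i| ≤ ∑ i, |η i| * C := by
  refine (Finset.abs_sum_le_sum_abs _ _).trans (Finset.sum_le_sum fun i _ => ?_)
  rw [abs_mul]
  exact mul_le_mul_of_nonneg_left (hx i) (abs_nonneg _)

section

variable {Ω : Type*} [MeasurableSpace Ω]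

lemma klDiv_eq_integral_llr (Q P : Measure Ω) : klDiv Q P = ∫ x, llr Q P x ∂Q := rfl

section Gibbs

variable {Q P : Measure Ω} [IsProbabilityMeasure Q] [IsProbabilityMeasure P]

lemma klDiv_eq_toReal_klDiv (hQP : Q ≪ P) : klDiv Q P = (InformationTheory.klDiv Q P).toReal :=
  (InformationTheory.toReal_klDiv_of_measure_eq hQP (by simp)).symm

lemma klDiv_nonneg (hQP : Q ≪ P) : 0 ≤ klDiv Q P :=
  klDiv_eq_toReal_klDiv hQP ▸ ENNReal.toReal_nonneg

lemma klDiv_eq_zero_iff (hQP : Q ≪ P) (hint : Integrable (llr Q P) Q) :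
    klDiv Q P = 0 ↔ Q = P := by
  rw [klDiv_eq_toReal_klDiv hQP, ENNReal.toReal_eq_zero_iff,
    or_iff_left (InformationTheory.klDiv_ne_top hQP hint), InformationTheory.klDiv_eq_zero_iff]

end Gibbs

lemma withDensity_exp_div_lintegral_eq_tilted {μ : Measure Ω} [NeZero μ] {f : Ω → ℝ}
    (hexp : Integrable (fun x => exp (f x)) μ) :
    μ.withDensity (fun x => ENNReal.ofReal (exp (f x)) / ∫⁻ y, ENNReal.ofReal (exp (f y)) ∂μ)
      = μ.tilted f := by
  rw [Measure.tilted, ← ofReal_integral_eq_lintegral_ofReal hexp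
    (Filter.Eventually.of_forall fun _ => (exp_pos _).le)]
  congr 1
  funext x
  rw [ENNReal.ofReal_div_of_pos (integral_exp_pos hexp)]

section Tilted

variable {μ ν : Measure Ω} [IsProbabilityMeasure μ] [IsProbabilityMeasure ν] {f : Ω → ℝ}

lemma klDiv_tilted_left (hexp : Integrable (fun x => exp (f x)) μ)
    (hf : Integrable f (μ.tilted f)) :
    klDiv (μ.tilted f) μ = ∫ x, f x ∂μ.tilted f - log (∫ x, exp (f x) ∂μ) := by
  have := isProbabilityMeasure_tilted hexp
  have hllr : llr (μ.tilted f) μ =ᵐ[μ.tilted f] fun x => f x - log (∫ x, exp (f x) ∂μ) :=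
    (tilted_absolutelyContinuous μ f).ae_le (log_rnDeriv_tilted_left_self hexp)
  rw [klDiv_eq_integral_llr, integral_congr_ae hllr, integral_sub hf (integrable_const _),
    integral_const, probReal_univ, one_smul]

lemma klDiv_tilted_right (hνμ : ν ≪ μ) (hllr : Integrable (llr ν μ) ν)
    (hexp : Integrable (fun x => exp (f x)) μ) (hfν : Integrable f ν) :
    klDiv ν (μ.tilted f) = klDiv ν μ - ∫ x, f x ∂ν + log (∫ x, exp (f x) ∂μ) :=
  integral_llr_tilted_right hνμ hfν hexp hllr

variable (hνμ : ν ≪ μ) (hllr : Integrable (llr ν μ) ν)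
  (hexp : Integrable (fun x => exp (f x)) μ) (hfν : Integrable f ν)
  (hf : Integrable f (μ.tilted f)) (hmean : ∫ x, f x ∂ν = ∫ x, f x ∂μ.tilted f)
include hνμ hllr hexp hfν hf hmean

theorem klDiv_eq_klDiv_tilted_add_klDiv_tilted :
    klDiv ν μ = klDiv ν (μ.tilted f) + klDiv (μ.tilted f) μ := by
  rw [klDiv_tilted_right hνμ hllr hexp hfν, klDiv_tilted_left hexp hf, hmean]
  ring

theorem klDiv_tilted_le : klDiv (μ.tilted f) μ ≤ klDiv ν μ := by
  have := isProbabilityMeasure_tilted hexp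
  rw [klDiv_eq_klDiv_tilted_add_klDiv_tilted hνμ hllr hexp hfν hf hmean, le_add_iff_nonneg_left]
  exact klDiv_nonneg (hνμ.trans (absolutelyContinuous_tilted hexp))

theorem klDiv_eq_klDiv_tilted_iff : klDiv ν μ = klDiv (μ.tilted f) μ ↔ ν = μ.tilted f := by
  have := isProbabilityMeasure_tilted hexp
  rw [klDiv_eq_klDiv_tilted_add_klDiv_tilted hνμ hllr hexp hfν hf hmean, add_eq_right]
  exact klDiv_eq_zero_iff (hνμ.trans (absolutelyContinuous_tilted hexp))
    (integrable_llr_tilted_right hνμ hfν hllr hexp)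

end Tilted

section BoundedFeatures

variable {ι : Type*} {F : Ω → ι → ℝ} {C : ℝ} {μ : Measure Ω} [IsFiniteMeasure μ]

lemma integrable_apply_of_abs_le (hF : Measurable F) (hFbd : ∀ ω i, |F ω i| ≤ C) (i : ι) :
    Integrable (F · i) μ :=
  .of_bound (measurable_pi_apply i |>.comp hF).aestronglyMeasurable C (.of_forall (hFbd · i))

variable [Fintype ι]

lemma integrable_sum_mul (η : ι → ℝ) (hF : Measurable F) (hFbd : ∀ ω i, |F ω i| ≤ C) :
    Integrable (fun ω => ∑ i, η i * F ω i) μ :=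
  .of_bound (by fun_prop) _ (.of_forall fun ω => abs_sum_mul_le η _ (hFbd ω))

lemma integrable_exp_neg_sum_mul (η : ι → ℝ) (hF : Measurable F) (hFbd : ∀ ω i, |F ω i| ≤ C) :
    Integrable (fun ω => exp (-∑ i, η i * F ω i)) μ :=
  .of_bound (by fun_prop) (exp (∑ i, |η i| * C)) (.of_forall fun ω => by
    rw [norm_eq_abs, abs_exp, exp_le_exp]
    exact (neg_le_abs _).trans (abs_sum_mul_le η _ (hFbd ω)))

lemma integral_sum_mul_eq_zero (η : ι → ℝ) (hF : Measurable F) (hFbd : ∀ ω i, |F ω i| ≤ C)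
    (hμ : ∀ i, ∫ ω, F ω i ∂μ = 0) : ∫ ω, ∑ i, η i * F ω i ∂μ = 0 := by
  rw [integral_finsetSum _ fun i _ => (integrable_apply_of_abs_le hF hFbd i).const_mul (η i)]
  simp [integral_const_mul, hμ]

end BoundedFeatures

end

theorem stmt9_general {Ω : Type*} [MeasurableSpace Ω] (G : Measure Ω) [IsProbabilityMeasure G]
    (n : ℕ) (F : Ω → Fin n → ℝ) (hF : Measurable F)
    (C : ℝ) (hFbd : ∀ ω i, |F ω i| ≤ C)
    (ηstar : Fin n → ℝ)
    (Qstar : Measure Ω)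
    (hQstar : Qstar = G.withDensity fun ω =>
      ENNReal.ofReal (Real.exp (-∑ i, ηstar i * F ω i)) /
        ∫⁻ ω', ENNReal.ofReal (Real.exp (-∑ i, ηstar i * F ω' i)) ∂G)
    (hbind : ∀ i, ∫ ω, F ω i ∂Qstar = 0)
    (Q : Measure Ω) [IsProbabilityMeasure Q] (hQG : Q ≪ G)
    (hKLfin : Integrable (fun ω => Real.log ((Q.rnDeriv G) ω).toReal) Q)
    (hQcon : ∀ i, ∫ ω, F ω i ∂Q = 0) :
    klDiv Q G = klDiv Q Qstar + klDiv Qstar G ∧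
      klDiv Qstar G ≤ klDiv Q G ∧
      (klDiv Q G = klDiv Qstar G ↔ Q = Qstar) := by
  set f : Ω → ℝ := fun ω => -∑ i, ηstar i * F ω i
  have hexp : Integrable (fun ω => exp (f ω)) G := integrable_exp_neg_sum_mul ηstar hF hFbd
  have hf_int (μ : Measure Ω) [IsFiniteMeasure μ] : Integrable f μ :=
    (integrable_sum_mul ηstar hF hFbd).neg
  have hf_mean (μ : Measure Ω) [IsFiniteMeasure μ] (hμ : ∀ i, ∫ ω, F ω i ∂μ = 0) :
      ∫ ω, f ω ∂μ = 0 := by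
    rw [integral_neg, integral_sum_mul_eq_zero ηstar hF hFbd hμ, neg_zero]
  obtain rfl : Qstar = G.tilted f := hQstar.trans (withDensity_exp_div_lintegral_eq_tilted hexp)
  have hmean : ∫ ω, f ω ∂Q = ∫ ω, f ω ∂G.tilted f := by rw [hf_mean Q hQcon, hf_mean _ hbind]
  exact ⟨klDiv_eq_klDiv_tilted_add_klDiv_tilted hQG hKLfin hexp (hf_int Q) (hf_int _) hmean,
    klDiv_tilted_le hQG hKLfin hexp (hf_int Q) (hf_int _) hmean,
    klDiv_eq_klDiv_tilted_iff hQG hKLfin hexp (hf_int Q) (hf_int _) hmean⟩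

theorem stmt9 {Ω : Type*} [MeasurableSpace Ω] (G : Measure Ω) [IsProbabilityMeasure G]
    (n : ℕ) (F : Ω → Fin n → ℝ) (hF : Measurable F)
    (C : ℝ) (hFbd : ∀ ω i, |F ω i| ≤ C)
    (ηstar : Fin n → ℝ)
    (Qstar : Measure Ω) [IsProbabilityMeasure Qstar]
    (hQstar : Qstar = G.withDensity fun ω =>
      ENNReal.ofReal (Real.exp (-∑ i, ηstar i * F ω i)) /
        ∫⁻ ω', ENNReal.ofReal (Real.exp (-∑ i, ηstar i * F ω' i)) ∂G)
    (hbind : ∀ i, ∫ ω, F ω i ∂Qstar = 0)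
    (Q : Measure Ω) [IsProbabilityMeasure Q] (hQG : Q ≪ G)
    (hKLfin : Integrable (fun ω => Real.log ((Q.rnDeriv G) ω).toReal) Q)
    (hQcon : ∀ i, ∫ ω, F ω i ∂Q = 0) :
    klDiv Q G = klDiv Q Qstar + klDiv Qstar G ∧
      klDiv Qstar G ≤ klDiv Q G ∧
      (klDiv Q G = klDiv Qstar G ↔ Q = Qstar) :=
  stmt9_general G n F hF C hFbd ηstar Qstar hQstar hbind Q hQG hKLfin hQcon
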